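/- Let Z″ be a d₁-dimensional standard normal random vector with d₁ ≥ 1. Then for every a > 0 and every t ∈ (0, √d₁), E[ 1 / (2a² + ‖Z″‖²) ] ≥ ( 1 − 2 exp(−t²/8) ) / ( d₁ + t √d₁ + 2a² ). -/

import Mathlib

open MeasureTheory ProbabilityTheory Real

/-- The `d`-dimensional standard normal distribution, as the product of
one-dimensional standard Gaussians on the coordinates. -/
noncomputable def stdGaussian (d : ℕ) : Measure (Fin d → ℝ) :=
  Measure.pi fun _ => gaussianReal 0 1

/-- Euclidean dot product on `ℝ^d`. -/
def dotp {d : ℕ} (x y : Fin d → ℝ) : ℝ := ∑ i, x i * y i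

/-- Euclidean norm on `ℝ^d`. -/
noncomputable def vecNorm {d : ℕ} (x : Fin d → ℝ) : ℝ := Real.sqrt (∑ i, x i ^ 2)

open scoped ENNReal NNReal

lemma gauss_int_eq (g : ℝ → ℝ) :
    ∫ x, g x ∂(gaussianReal 0 1) = ∫ x, gaussianPDFReal 0 1 x * g x := by
  rw [gaussianReal_of_var_ne_zero 0 one_ne_zero]
  have h : gaussianPDF 0 1 = fun x => ((gaussianPDFReal 0 1 x).toNNReal : ℝ≥0∞) := rfl
  rw [h, integral_withDensity_eq_integral_smul
    ((measurable_gaussianPDFReal 0 1).real_toNNReal)]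
  congr 1
  ext x
  rw [NNReal.smul_def, Real.coe_toNNReal _ (gaussianPDFReal_nonneg 0 1 x)]
  rfl

lemma gauss_integrable_iff (g : ℝ → ℝ) :
    Integrable g (gaussianReal 0 1) ↔
      Integrable (fun x => gaussianPDFReal 0 1 x * g x) volume := by
  rw [gaussianReal_of_var_ne_zero 0 one_ne_zero]
  have h : gaussianPDF 0 1 = fun x => ((gaussianPDFReal 0 1 x).toNNReal : ℝ≥0∞) := rfl
  rw [h, integrable_withDensity_iff_integrable_smul
    ((measurable_gaussianPDFReal 0 1).real_toNNReal)]
  constructor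
  · intro hgg; exact hgg.congr (by
      filter_upwards with x
      rw [NNReal.smul_def, Real.coe_toNNReal _ (gaussianPDFReal_nonneg 0 1 x)]; rfl)
  · intro hgg
    exact hgg.congr (by
      filter_upwards with x
      rw [NNReal.smul_def, Real.coe_toNNReal _ (gaussianPDFReal_nonneg 0 1 x)]; rfl)

lemma pdf_mul_exp (s x : ℝ) :
    gaussianPDFReal 0 1 x * Real.exp (s * x ^ 2)
      = (Real.sqrt (2 * π))⁻¹ * Real.exp (-(1/2 - s) * x ^ 2) := by
  rw [gaussianPDFReal]
  push_cast
  rw [mul_assoc, ← Real.exp_add]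
  ring_nf

lemma gauss_exp_sq_integrable {s : ℝ} (hs : s < 1/2) :
    Integrable (fun x => Real.exp (s * x ^ 2)) (gaussianReal 0 1) := by
  rw [gauss_integrable_iff]
  have : Integrable (fun x : ℝ => (Real.sqrt (2 * π))⁻¹
      * Real.exp (-(1/2 - s) * x ^ 2)) volume := by
    refine Integrable.const_mul ?_ _
    simpa [sq] using integrable_exp_neg_mul_sq (by linarith : (0:ℝ) < 1/2 - s)
  exact this.congr (by filter_upwards with x; rw [pdf_mul_exp])

lemma gauss_exp_sq_integral {s : ℝ} (hs : s < 1/2) :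
    ∫ x, Real.exp (s * x ^ 2) ∂(gaussianReal 0 1) = 1 / Real.sqrt (1 - 2 * s) := by
  have hb : (0:ℝ) < 1/2 - s := by linarith
  rw [gauss_int_eq]
  simp_rw [pdf_mul_exp s]
  rw [integral_const_mul]
  have : ∫ x : ℝ, Real.exp (-(1/2 - s) * x ^ 2) = Real.sqrt (π / (1/2 - s)) := by
    simpa [sq] using integral_gaussian (1/2 - s)
  rw [this]
  rw [← Real.sqrt_inv, ← Real.sqrt_mul (by positivity)]
  have key : (2 * π)⁻¹ * (π / (1/2 - s)) = (1 - 2*s)⁻¹ := by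
    rw [inv_eq_one_div, inv_eq_one_div, div_mul_div_comm, one_mul,
      div_eq_div_iff (ne_of_gt (mul_pos (by positivity : (0:ℝ) < 2*π) hb))
        (by linarith : (1:ℝ) - 2*s ≠ 0)]
    ring
  rw [key]
  rw [Real.sqrt_inv, one_div]

lemma one_div_sqrt_le {s : ℝ} (h0 : 0 ≤ s) (h1 : s ≤ 1/4) :
    1 / Real.sqrt (1 - 2 * s) ≤ Real.exp (s + 2 * s ^ 2) := by
  have hu : (0:ℝ) < 1 - 2 * s := by linarith
  have hq := Real.quadratic_le_exp_of_nonneg (x := 2*s + 4*s^2) (by nlinarith)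
  have hprod : 1 ≤ (1 - 2*s) * Real.exp (2*s + 4*s^2) := by
    nlinarith [hq, sq_nonneg s, sq_nonneg (s*(1-4*s)), mul_nonneg h0 (sq_nonneg s)]
  have hsq : (1 / Real.sqrt (1 - 2 * s)) ^ 2 ≤ (Real.exp (s + 2 * s ^ 2)) ^ 2 := by
    rw [div_pow, one_pow, Real.sq_sqrt hu.le, ← Real.exp_nat_mul, div_le_iff₀ hu]
    have h2 : ((2:ℕ):ℝ) * (s + 2 * s ^ 2) = 2*s + 4*s^2 := by push_cast; ring
    rw [h2, mul_comm]
    exact hprod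
  have h1' : (0:ℝ) ≤ 1 / Real.sqrt (1 - 2 * s) := by positivity
  exact (pow_le_pow_iff_left₀ h1' (Real.exp_pos _).le two_ne_zero).mp hsq

lemma exp_S_eq_prod {d : ℕ} (s : ℝ) (z : Fin d → ℝ) :
    Real.exp (s * ∑ i, z i ^ 2) = ∏ i, Real.exp (s * z i ^ 2) := by
  rw [← Real.exp_sum, Finset.mul_sum]

lemma integrable_exp_S {d : ℕ} {s : ℝ} (hs : s < 1/2) :
    Integrable (fun z : Fin d → ℝ => Real.exp (s * ∑ i, z i ^ 2)) (stdGaussian d) := by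
  letI : MeasureSpace ℝ := ⟨gaussianReal 0 1⟩
  haveI : IsProbabilityMeasure (volume : Measure ℝ) :=
    inferInstanceAs (IsProbabilityMeasure (gaussianReal 0 1))
  have h : stdGaussian d = (volume : Measure (Fin d → ℝ)) := rfl
  rw [h]
  have := Integrable.fintype_prod (𝕜 := ℝ) (f := fun (_ : Fin d) (x : ℝ) => Real.exp (s * x ^ 2))
    (fun _ => gauss_exp_sq_integrable hs)
  exact this.congr (by filter_upwards with z; rw [exp_S_eq_prod])

lemma integral_exp_S {d : ℕ} {s : ℝ} (hs : s < 1/2) :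
    ∫ z, Real.exp (s * ∑ i, z i ^ 2) ∂(stdGaussian d)
      = (1 / Real.sqrt (1 - 2 * s)) ^ d := by
  letI : MeasureSpace ℝ := ⟨gaussianReal 0 1⟩
  haveI : IsProbabilityMeasure (volume : Measure ℝ) :=
    inferInstanceAs (IsProbabilityMeasure (gaussianReal 0 1))
  have h : stdGaussian d = (volume : Measure (Fin d → ℝ)) := rfl
  rw [h]
  simp_rw [exp_S_eq_prod]
  erw [MeasureTheory.integral_fintype_prod_eq_pow (ι := Fin d) (fun x : ℝ => Real.exp (s * x ^ 2)),
    Fintype.card_fin]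
  rw [show (∫ x : ℝ, Real.exp (s * x ^ 2)) = ∫ x, Real.exp (s * x ^ 2) ∂(gaussianReal 0 1)
    from rfl, gauss_exp_sq_integral hs]

lemma measurable_S {d : ℕ} : Measurable (fun z : Fin d → ℝ => ∑ i, z i ^ 2) := by
  exact Finset.measurable_sum _ (fun i _ => (measurable_pi_apply i).pow_const 2)

lemma tail_bound {d : ℕ} (hd : 1 ≤ d) {t : ℝ} (ht0 : 0 < t) (htd : t ≤ Real.sqrt d) :
    ((stdGaussian d) {z | (d : ℝ) + t * Real.sqrt d ≤ ∑ i, z i ^ 2}).toReal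
      ≤ Real.exp (-t ^ 2 / 8) := by
  have hd0 : (0:ℝ) < d := by exact_mod_cast hd
  have hsqd : 0 < Real.sqrt d := Real.sqrt_pos.mpr hd0
  have hdd : Real.sqrt d * Real.sqrt d = d := Real.mul_self_sqrt hd0.le
  set s : ℝ := t / (4 * Real.sqrt d) with hs_def
  have hs0 : 0 ≤ s := by positivity
  have hs1 : s ≤ 1/4 := by
    rw [hs_def, div_le_iff₀ (by positivity)]
    nlinarith
  have hs2 : s < 1/2 := by linarith
  haveI : IsProbabilityMeasure (stdGaussian d) := by
    unfold _root_.stdGaussian; infer_instance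
  have hchern := measure_ge_le_exp_mul_mgf (μ := stdGaussian d)
    (X := fun z => ∑ i, z i ^ 2) ((d : ℝ) + t * Real.sqrt d) hs0 (integrable_exp_S hs2)
  have hmgf : mgf (fun z : Fin d → ℝ => ∑ i, z i ^ 2) (stdGaussian d) s
      = (1 / Real.sqrt (1 - 2 * s)) ^ d := integral_exp_S hs2
  calc ((stdGaussian d) {z | (d : ℝ) + t * Real.sqrt d ≤ ∑ i, z i ^ 2}).toReal
      ≤ Real.exp (-s * ((d : ℝ) + t * Real.sqrt d))
          * mgf (fun z : Fin d → ℝ => ∑ i, z i ^ 2) (stdGaussian d) s := hchern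
    _ ≤ Real.exp (-s * ((d : ℝ) + t * Real.sqrt d)) * Real.exp (s + 2 * s ^ 2) ^ d := by
        rw [hmgf]
        refine mul_le_mul_of_nonneg_left ?_ (Real.exp_pos _).le
        exact pow_le_pow_left₀ (by positivity) (one_div_sqrt_le hs0 hs1) d
    _ = Real.exp (-s * ((d : ℝ) + t * Real.sqrt d) + d * (s + 2 * s ^ 2)) := by
        rw [← Real.exp_nat_mul, ← Real.exp_add]
    _ = Real.exp (-t ^ 2 / 8) := by
        congr 1
        have hne : Real.sqrt d ≠ 0 := ne_of_gt hsqd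
        have e1 : s * Real.sqrt d = t / 4 := by
          rw [hs_def]; field_simp
        have e3 : (d : ℝ) * s ^ 2 = t ^ 2 / 16 := by
          rw [hs_def, div_pow,
            show ((4:ℝ) * Real.sqrt d) ^ 2 = 16 * d by rw [mul_pow, Real.sq_sqrt hd0.le]; norm_num]
          field_simp
        push_cast
        linear_combination (-t) * e1 + 2 * e3

/-- For a `d₁`-dimensional standard normal vector `Z″` with `d₁ ≥ 1`, `a > 0` and
`t ∈ (0, √d₁)`: `E[1/(2a² + ‖Z″‖²)] ≥ (1 − 2exp(−t²/8)) / (d₁ + t√d₁ + 2a²)`. -/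
theorem statement19 {d₁ : ℕ} (hd : 1 ≤ d₁) (a t : ℝ) (ha : 0 < a)
    (ht : t ∈ Set.Ioo 0 (Real.sqrt d₁)) :
    (1 - 2 * Real.exp (-t ^ 2 / 8)) / ((d₁ : ℝ) + t * Real.sqrt d₁ + 2 * a ^ 2)
      ≤ ∫ z, 1 / (2 * a ^ 2 + ∑ i, z i ^ 2) ∂(stdGaussian d₁) := by
  haveI : IsProbabilityMeasure (stdGaussian d₁) := by
    unfold _root_.stdGaussian; infer_instance
  obtain ⟨ht0, htd⟩ := ht
  have hd0 : (0:ℝ) < d₁ := by exact_mod_cast hd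
  have hsqd : 0 < Real.sqrt d₁ := Real.sqrt_pos.mpr hd0
  set M : ℝ := (d₁ : ℝ) + t * Real.sqrt d₁ with hM_def
  have hM0 : 0 < M := by positivity
  have hMa : 0 < M + 2 * a ^ 2 := by positivity
  set T : Set (Fin d₁ → ℝ) := {z | M ≤ ∑ i, z i ^ 2} with hT_def
  have hTmeas : MeasurableSet T := measurableSet_le measurable_const measurable_S
  have htail : ((stdGaussian d₁) T).toReal ≤ Real.exp (-t ^ 2 / 8) :=
    tail_bound hd ht0 htd.le
  have hsplit : ((stdGaussian d₁) T).toReal + ((stdGaussian d₁) Tᶜ).toReal = 1 := by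
    rw [← ENNReal.toReal_add (measure_ne_top _ _) (measure_ne_top _ _),
      measure_add_measure_compl hTmeas, measure_univ, ENNReal.toReal_one]
  have hS_nonneg : ∀ z : Fin d₁ → ℝ, 0 ≤ ∑ i, z i ^ 2 :=
    fun z => Finset.sum_nonneg fun i _ => sq_nonneg _
  have h2a : (0:ℝ) < 2 * a ^ 2 := by positivity
  have hfm : Measurable fun z : Fin d₁ → ℝ => 1 / (2 * a ^ 2 + ∑ i, z i ^ 2) := by
    exact (measurable_const.add measurable_S).const_div 1
  have hf_int : Integrable (fun z => 1 / (2 * a ^ 2 + ∑ i, z i ^ 2)) (stdGaussian d₁) := by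
    refine (integrable_const ((2 * a ^ 2)⁻¹ : ℝ)).mono' hfm.aestronglyMeasurable ?_
    filter_upwards with z
    rw [Real.norm_eq_abs, abs_of_nonneg (by positivity), one_div]
    exact inv_anti₀ h2a (by linarith [hS_nonneg z])
  have hpt : ∀ z, Tᶜ.indicator (fun _ => (M + 2 * a ^ 2)⁻¹) z
      ≤ 1 / (2 * a ^ 2 + ∑ i, z i ^ 2) := by
    intro z
    by_cases hz : z ∈ Tᶜ
    · rw [Set.indicator_of_mem hz]
      have hzS : ∑ i, z i ^ 2 < M := by
        simpa [hT_def, not_le] using hz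
      rw [one_div]
      exact inv_anti₀ (by linarith [hS_nonneg z]) (by linarith)
    · rw [Set.indicator_of_notMem hz]
      positivity
  have hind_int : Integrable (Tᶜ.indicator fun _ => (M + 2 * a ^ 2)⁻¹) (stdGaussian d₁) :=
    (integrable_const _).indicator hTmeas.compl
  calc (1 - 2 * Real.exp (-t ^ 2 / 8)) / (M + 2 * a ^ 2)
      ≤ ((stdGaussian d₁) Tᶜ).toReal / (M + 2 * a ^ 2) := by
        apply (div_le_div_iff_of_pos_right hMa).mpr
        linarith [Real.exp_pos (-t ^ 2 / 8)]
    _ = ∫ z, Tᶜ.indicator (fun _ => (M + 2 * a ^ 2)⁻¹) z ∂(stdGaussian d₁) := by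
        rw [integral_indicator_const _ hTmeas.compl, smul_eq_mul, div_eq_mul_inv, measureReal_def]
    _ ≤ ∫ z, 1 / (2 * a ^ 2 + ∑ i, z i ^ 2) ∂(stdGaussian d₁) :=
        integral_mono hind_int hf_int hpt
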